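/- arXiv:math-ph/0401042 — 2 statements merged into one kernel-verified Lean document; each statement's English description precedes it below -/
import Mathlib

section
/- For every φ ∈ X, ℰ(φ) ≥ 2 (∫_{ℝ³} |∇φ|² dx)^{1/2} (∫_{ℝ³} |A(φ)|² dx)^{1/2} ≥ 6 ∫_{ℝ³} |∂₁φ∧∂₂φ∧∂₃φ| dx. -/
/- Common setting: Skyrme maps φ : ℝ³ → S³ ⊂ ℝ⁴ with weak partial derivatives. -/

open MeasureTheory Real Filter
open scoped Topology ENNReal BigOperators

noncomputable section

abbrev R3 : Type := Fin 3 → ℝ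
abbrev R4 : Type := Fin 4 → ℝ

/-- Euclidean dot product on ℝ⁴. -/
def dot (u v : R4) : ℝ := ∑ a, u a * v a

/-- Squared Euclidean norm on ℝ⁴. -/
def nsq (u : R4) : ℝ := dot u u

/-- |u∧v|² = |u|²|v|² − ⟨u,v⟩². -/
def wedgeSq (u v : R4) : ℝ := nsq u * nsq v - (dot u v) ^ 2

/-- Gram determinant of three vectors of ℝ⁴. -/
def gram (u v w : R4) : ℝ :=
  Matrix.det !![dot u u, dot u v, dot u w; dot v u, dot v v, dot v w; dot w u, dot w v, dot w w]

/-- Determinant of the 4×4 matrix with columns a, b, c, d. -/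
def det4 (a b c d : R4) : ℝ := Matrix.det (Matrix.of fun i j => ![a, b, c, d] j i)

/-- Smooth compactly supported test functions on ℝ³. -/
def IsTestFun {E : Type*} [NormedAddCommGroup E] [NormedSpace ℝ E] (ψ : R3 → E) : Prop :=
  ContDiff ℝ (⊤ : ℕ∞) ψ ∧ HasCompactSupport ψ

/-- A weakly differentiable map φ : ℝ³ → S³ ⊂ ℝ⁴ together with its weak
partial derivatives `pderiv i = ∂ᵢφ`. -/
structure SkyrmeMap where
  toFun : R3 → R4
  pderiv : Fin 3 → R3 → R4
  meas : Measurable toFun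
  pderiv_locInt : ∀ i, LocallyIntegrable (pderiv i) volume
  sphere : ∀ᵐ x : R3, nsq (toFun x) = 1
  weak : ∀ (i : Fin 3) (a : Fin 4) (ψ : R3 → ℝ), IsTestFun ψ →
    ∫ x : R3, fderiv ℝ ψ x (Pi.single i 1) * toFun x a
      = - ∫ x : R3, ψ x * pderiv i x a

/-- |∇φ|² = Σᵢ |∂ᵢφ|². -/
def gradSq (φ : SkyrmeMap) (x : R3) : ℝ := ∑ i, nsq (φ.pderiv i x)

/-- |A(φ)|² = Σᵢⱼ |∂ᵢφ∧∂ⱼφ|². -/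
def ASq (φ : SkyrmeMap) (x : R3) : ℝ := ∑ i, ∑ j, wedgeSq (φ.pderiv i x) (φ.pderiv j x)

/-- The Skyrme energy density |∇φ|² + |A(φ)|². -/
def energyDensity (φ : SkyrmeMap) (x : R3) : ℝ := gradSq φ x + ASq φ x

/-- φ ∈ X : finite Skyrme energy. -/
def memX (φ : SkyrmeMap) : Prop := Integrable (energyDensity φ) volume

/-- The Skyrme energy ℰ(φ). -/
def energy (φ : SkyrmeMap) : ℝ := ∫ x, energyDensity φ x

/-- det(φ, ∇φ)(x). -/
def detDen (φ : SkyrmeMap) (x : R3) : ℝ :=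
  det4 (φ.toFun x) (φ.pderiv 0 x) (φ.pderiv 1 x) (φ.pderiv 2 x)

/-- The topological degree d(φ) = (1/(2π²)) ∫ det(φ,∇φ). -/
def degree (φ : SkyrmeMap) : ℝ := (1 / (2 * π ^ 2)) * ∫ x, detDen φ x

/-- I_k = inf of the energy over maps of degree k. -/
def Skyrme.I (k : ℤ) : ℝ :=
  sInf {E : ℝ | ∃ φ : SkyrmeMap, memX φ ∧ degree φ = (k : ℝ) ∧ energy φ = E}

/-- The north pole P = (0,0,0,1) of S³. -/
def northPole : R4 := ![0, 0, 0, 1]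

/-- The Euclidean ball B(y,r) in ℝ³. -/
def eball (y : R3) (r : ℝ) : Set R3 := {x | ∑ i, (x i - y i) ^ 2 < r ^ 2}


section SkyrmeAux

lemma dot_comm' (u v : R4) : dot u v = dot v u :=
  Finset.sum_congr rfl fun a _ => mul_comm _ _

lemma nsq_nonneg' (u : R4) : 0 ≤ nsq u := by
  unfold nsq dot
  exact Finset.sum_nonneg fun a _ => mul_self_nonneg _

lemma wedgeSq_nonneg' (u v : R4) : 0 ≤ wedgeSq u v := by
  have h := Finset.sum_mul_sq_le_sq_mul_sq Finset.univ u v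
  have h2 : (dot u v) ^ 2 ≤ nsq u * nsq v := by
    simpa [dot, nsq, sq] using h
  simp only [wedgeSq]; linarith

lemma wedgeSq_self' (u : R4) : wedgeSq u u = 0 := by
  simp [wedgeSq, nsq, sq]

lemma wedgeSq_comm' (u v : R4) : wedgeSq u v = wedgeSq v u := by
  simp [wedgeSq, nsq, dot_comm' u v]; ring

lemma gram_eq' (u v w : R4) : gram u v w =
    dot u u * dot v v * dot w w + 2 * (dot u v * dot v w * dot u w)
      - dot u u * dot v w ^ 2 - dot v v * dot u w ^ 2 - dot w w * dot u v ^ 2 := by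
  simp [gram, Matrix.det_fin_three, dot_comm' v u, dot_comm' w u, dot_comm' w v]
  ring

lemma gram_swap' (u v w : R4) : gram u v w = gram v u w := by
  rw [gram_eq', gram_eq', dot_comm' v u]; ring

lemma gram_cycle' (u v w : R4) : gram u v w = gram w u v := by
  rw [gram_eq', gram_eq', dot_comm' w u, dot_comm' w v]; ring

lemma gram_le' (u v w : R4) : gram u v w ≤ nsq u * wedgeSq v w := by
  have hg := nsq_nonneg' w
  have he := nsq_nonneg' v
  have hA := wedgeSq_nonneg' v w
  rw [gram_eq']
  simp only [wedgeSq, nsq] at *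
  rcases eq_or_lt_of_le hg with hg0 | hg0
  · have hf : dot v w = 0 := by nlinarith [sq_nonneg (dot v w)]
    rw [← hg0, hf]
    nlinarith [mul_nonneg he (sq_nonneg (dot u w))]
  · nlinarith [sq_nonneg (dot u v * dot w w - dot u w * dot v w),
      mul_nonneg (sq_nonneg (dot u w)) hA]

lemma pair_ineq' (p q A B G : ℝ) (hp : 0 ≤ p) (hq : 0 ≤ q) (hA : 0 ≤ A) (hB : 0 ≤ B)
    (h1 : G ≤ p * A) (h2 : G ≤ q * B) : 2 * G ≤ p * B + q * A := by
  rcases le_or_gt G 0 with h | h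
  · nlinarith [mul_nonneg hp hB, mul_nonneg hq hA]
  · have hGG : G * G ≤ (p * A) * (q * B) :=
      mul_le_mul h1 h2 h.le (le_trans h.le h1)
    nlinarith [sq_nonneg (p * B - q * A), mul_nonneg hp hB, mul_nonneg hq hA,
      add_nonneg (mul_nonneg hp hB) (mul_nonneg hq hA)]

lemma key_ineq' (u v w : R4) :
    9 * gram u v w ≤ (nsq u + nsq v + nsq w) * (2 * (wedgeSq v w + wedgeSq u w + wedgeSq u v)) := by
  have h1 : gram u v w ≤ nsq u * wedgeSq v w := gram_le' u v w
  have h2 : gram u v w ≤ nsq v * wedgeSq u w := by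
    rw [gram_swap' u v w]; exact gram_le' v u w
  have h3 : gram u v w ≤ nsq w * wedgeSq u v := by
    rw [gram_cycle' u v w]; exact gram_le' w u v
  have p12 := pair_ineq' _ _ _ _ _ (nsq_nonneg' u) (nsq_nonneg' v) (wedgeSq_nonneg' v w)
    (wedgeSq_nonneg' u w) h1 h2
  have p13 := pair_ineq' _ _ _ _ _ (nsq_nonneg' u) (nsq_nonneg' w) (wedgeSq_nonneg' v w)
    (wedgeSq_nonneg' u v) h1 h3
  have p23 := pair_ineq' _ _ _ _ _ (nsq_nonneg' v) (nsq_nonneg' w) (wedgeSq_nonneg' u w)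
    (wedgeSq_nonneg' u v) h2 h3
  have hnn : 0 ≤ (nsq u + nsq v + nsq w) * (wedgeSq v w + wedgeSq u w + wedgeSq u v) :=
    mul_nonneg
      (by have := nsq_nonneg' u; have := nsq_nonneg' v; have := nsq_nonneg' w; linarith)
      (by have := wedgeSq_nonneg' v w; have := wedgeSq_nonneg' u w;
          have := wedgeSq_nonneg' u v; linarith)
  nlinarith [hnn]

lemma gradSq_eq' (φ : SkyrmeMap) (x : R3) :
    gradSq φ x = nsq (φ.pderiv 0 x) + nsq (φ.pderiv 1 x) + nsq (φ.pderiv 2 x) := by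
  simp [gradSq, Fin.sum_univ_three]

lemma ASq_eq' (φ : SkyrmeMap) (x : R3) :
    ASq φ x = 2 * (wedgeSq (φ.pderiv 1 x) (φ.pderiv 2 x)
      + wedgeSq (φ.pderiv 0 x) (φ.pderiv 2 x)
      + wedgeSq (φ.pderiv 0 x) (φ.pderiv 1 x)) := by
  simp only [ASq, Fin.sum_univ_three, wedgeSq_self',
    wedgeSq_comm' (φ.pderiv 1 x) (φ.pderiv 0 x),
    wedgeSq_comm' (φ.pderiv 2 x) (φ.pderiv 0 x),
    wedgeSq_comm' (φ.pderiv 2 x) (φ.pderiv 1 x)]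
  ring

lemma gradSq_nonneg' (φ : SkyrmeMap) (x : R3) : 0 ≤ gradSq φ x :=
  Finset.sum_nonneg fun i _ => nsq_nonneg' _

lemma ASq_nonneg' (φ : SkyrmeMap) (x : R3) : 0 ≤ ASq φ x :=
  Finset.sum_nonneg fun i _ => Finset.sum_nonneg fun j _ => wedgeSq_nonneg' _ _

lemma pointwise_ineq' (φ : SkyrmeMap) (x : R3) :
    3 * Real.sqrt (gram (φ.pderiv 0 x) (φ.pderiv 1 x) (φ.pderiv 2 x))
      ≤ Real.sqrt (gradSq φ x) * Real.sqrt (ASq φ x) := by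
  have h9 : 9 * gram (φ.pderiv 0 x) (φ.pderiv 1 x) (φ.pderiv 2 x) ≤ gradSq φ x * ASq φ x := by
    rw [gradSq_eq', ASq_eq']
    exact key_ineq' _ _ _
  calc 3 * Real.sqrt (gram (φ.pderiv 0 x) (φ.pderiv 1 x) (φ.pderiv 2 x))
      = Real.sqrt (9 * gram (φ.pderiv 0 x) (φ.pderiv 1 x) (φ.pderiv 2 x)) := by
        rw [show (9:ℝ) = 3 ^ 2 by norm_num, Real.sqrt_mul (by positivity), Real.sqrt_sq (by norm_num : (0:ℝ) ≤ 3)]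
    _ ≤ Real.sqrt (gradSq φ x * ASq φ x) := Real.sqrt_le_sqrt h9
    _ = Real.sqrt (gradSq φ x) * Real.sqrt (ASq φ x) := Real.sqrt_mul (gradSq_nonneg' φ x) _

lemma cauchy_schwarz_integral' {α : Type*} [MeasurableSpace α] {μ : Measure α} {f g : α → ℝ}
    (hf0 : 0 ≤ᵐ[μ] f) (hg0 : 0 ≤ᵐ[μ] g)
    (hf : MemLp f 2 μ) (hg : MemLp g 2 μ) :
    ∫ a, f a * g a ∂μ ≤ Real.sqrt (∫ a, f a ^ 2 ∂μ) * Real.sqrt (∫ a, g a ^ 2 ∂μ) := by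
  have hpq : Real.HolderConjugate 2 2 := Real.holderConjugate_iff.mpr ⟨by norm_num, by norm_num⟩
  have h2 : ENNReal.ofReal (2:ℝ) = 2 := by norm_num
  have := integral_mul_le_Lp_mul_Lq_of_nonneg hpq hf0 hg0 (h2 ▸ hf) (h2 ▸ hg)
  calc ∫ a, f a * g a ∂μ
      ≤ (∫ a, f a ^ (2:ℝ) ∂μ) ^ (1/(2:ℝ)) * (∫ a, g a ^ (2:ℝ) ∂μ) ^ (1/(2:ℝ)) := this
    _ = Real.sqrt (∫ a, f a ^ 2 ∂μ) * Real.sqrt (∫ a, g a ^ 2 ∂μ) := by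
        rw [Real.sqrt_eq_rpow, Real.sqrt_eq_rpow]
        norm_num [Real.rpow_two]

end SkyrmeAux

/-- ℰ(φ) ≥ 2 (∫|∇φ|²)^{1/2} (∫|A(φ)|²)^{1/2} ≥ 6 ∫ |∂₁φ∧∂₂φ∧∂₃φ|. -/
theorem skyrme_energy_chain (φ : SkyrmeMap) (hφ : memX φ) :
    2 * Real.sqrt (∫ x, gradSq φ x) * Real.sqrt (∫ x, ASq φ x) ≤ energy φ ∧
    6 * ∫ x, Real.sqrt (gram (φ.pderiv 0 x) (φ.pderiv 1 x) (φ.pderiv 2 x))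
      ≤ 2 * Real.sqrt (∫ x, gradSq φ x) * Real.sqrt (∫ x, ASq φ x) := by
  -- measurability
  have hda : ∀ (i : Fin 3) (a : Fin 4), AEMeasurable (fun x => φ.pderiv i x a) volume :=
    fun i a => ((continuous_apply a).comp_aestronglyMeasurable
      (φ.pderiv_locInt i).aestronglyMeasurable).aemeasurable
  have hdotm : ∀ (i j : Fin 3), AEMeasurable (fun x => dot (φ.pderiv i x) (φ.pderiv j x)) volume := by
    intro i j
    unfold dot
    exact Finset.aemeasurable_fun_sum _ fun a _ => (hda i a).mul (hda j a)
  have hgradm : AEMeasurable (gradSq φ) volume := by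
    unfold gradSq nsq
    exact Finset.aemeasurable_fun_sum _ fun i _ => hdotm i i
  have hASqm : AEMeasurable (ASq φ) volume := by
    unfold ASq wedgeSq nsq
    refine Finset.aemeasurable_fun_sum _ fun i _ => Finset.aemeasurable_fun_sum _ fun j _ => ?_
    exact ((hdotm i i).mul (hdotm j j)).sub ((hdotm i j).pow_const 2)
  -- integrability
  have hgrad_nn := gradSq_nonneg' φ
  have hASq_nn := ASq_nonneg' φ
  have hgi : Integrable (gradSq φ) volume := by
    refine hφ.mono' hgradm.aestronglyMeasurable (ae_of_all _ fun x => ?_)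
    rw [Real.norm_of_nonneg (hgrad_nn x)]
    have := hASq_nn x
    unfold energyDensity
    linarith
  have hAi : Integrable (ASq φ) volume := by
    refine hφ.mono' hASqm.aestronglyMeasurable (ae_of_all _ fun x => ?_)
    rw [Real.norm_of_nonneg (hASq_nn x)]
    have := hgrad_nn x
    unfold energyDensity
    linarith
  have henergy : energy φ = (∫ x, gradSq φ x) + ∫ x, ASq φ x := by
    unfold energy energyDensity
    exact integral_add hgi hAi
  have ha : 0 ≤ ∫ x, gradSq φ x := integral_nonneg hgrad_nn
  have hb : 0 ≤ ∫ x, ASq φ x := integral_nonneg hASq_nn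
  constructor
  · rw [henergy]
    nlinarith [sq_nonneg (Real.sqrt (∫ x, gradSq φ x) - Real.sqrt (∫ x, ASq φ x)),
      Real.sq_sqrt ha, Real.sq_sqrt hb, Real.sqrt_nonneg (∫ x, gradSq φ x),
      Real.sqrt_nonneg (∫ x, ASq φ x)]
  · set f := fun x => Real.sqrt (gradSq φ x) with hf_def
    set g := fun x => Real.sqrt (ASq φ x) with hg_def
    have hfm : AEStronglyMeasurable f volume :=
      (Real.continuous_sqrt.comp_aestronglyMeasurable hgradm.aestronglyMeasurable)
    have hgm : AEStronglyMeasurable g volume :=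
      (Real.continuous_sqrt.comp_aestronglyMeasurable hASqm.aestronglyMeasurable)
    have hf2 : ∀ x, f x ^ 2 = gradSq φ x := fun x => Real.sq_sqrt (hgrad_nn x)
    have hg2 : ∀ x, g x ^ 2 = ASq φ x := fun x => Real.sq_sqrt (hASq_nn x)
    have hfL2 : MemLp f 2 volume := by
      rw [memLp_two_iff_integrable_sq hfm]
      exact hgi.congr (ae_of_all _ fun x => (hf2 x).symm)
    have hgL2 : MemLp g 2 volume := by
      rw [memLp_two_iff_integrable_sq hgm]
      exact hAi.congr (ae_of_all _ fun x => (hg2 x).symm)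
    have hCS : ∫ x, f x * g x ≤ Real.sqrt (∫ x, gradSq φ x) * Real.sqrt (∫ x, ASq φ x) := by
      have h := cauchy_schwarz_integral' (μ := volume)
        (ae_of_all _ fun x => Real.sqrt_nonneg _) (ae_of_all _ fun x => Real.sqrt_nonneg _)
        hfL2 hgL2
      have e1 : ∫ x, f x ^ 2 = ∫ x, gradSq φ x := integral_congr_ae (ae_of_all _ hf2)
      have e2 : ∫ x, g x ^ 2 = ∫ x, ASq φ x := integral_congr_ae (ae_of_all _ hg2)
      rwa [e1, e2] at h
    have hfgi : Integrable (fun x => f x * g x) volume := by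
      refine hφ.mono' (hfm.mul hgm) (ae_of_all _ fun x => ?_)
      rw [Real.norm_of_nonneg (mul_nonneg (Real.sqrt_nonneg _) (Real.sqrt_nonneg _))]
      have h1 := hf2 x
      have h2 := hg2 x
      have h3 := sq_nonneg (f x - g x)
      unfold energyDensity
      nlinarith [Real.sqrt_nonneg (gradSq φ x), Real.sqrt_nonneg (ASq φ x)]
    have hmono : ∫ x, 3 * Real.sqrt (gram (φ.pderiv 0 x) (φ.pderiv 1 x) (φ.pderiv 2 x))
        ≤ ∫ x, f x * g x := by
      refine integral_mono_of_nonneg (ae_of_all _ fun x => by positivity) hfgi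
        (ae_of_all _ fun x => pointwise_ineq' φ x)
    have hconst : ∫ x, 3 * Real.sqrt (gram (φ.pderiv 0 x) (φ.pderiv 1 x) (φ.pderiv 2 x))
        = 3 * ∫ x, Real.sqrt (gram (φ.pderiv 0 x) (φ.pderiv 1 x) (φ.pderiv 2 x)) :=
      MeasureTheory.integral_const_mul 3 _
    rw [hconst] at hmono
    linarith
end
end

section
/- For any three vectors u, v, w ∈ ℝ⁴, 3 √(Gram(u,v,w)) ≤ (|u|² + |v|² + |w|²)^{1/2} · (|u∧v|² + |u∧w|² + |v∧w|²)^{1/2}, where Gram(u,v,w) is the determinant of the 3×3 Gram matrix (⟨u,u⟩, ⟨u,v⟩, ⟨u,w⟩; ⟨v,u⟩, ⟨v,v⟩, ⟨v,w⟩; ⟨w,u⟩, ⟨w,v⟩, ⟨w,w⟩) and |u∧v|² = |u|²|v|² − ⟨u,v⟩². -/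
/- Common setting: Skyrme maps φ : ℝ³ → S³ ⊂ ℝ⁴ with weak partial derivatives. -/

open MeasureTheory Real Filter
open scoped Topology ENNReal BigOperators

noncomputable section

set_option maxHeartbeats 1000000 in
lemma keyineq (a b c d e f : ℝ) (ha : 0 ≤ a) (hb : 0 ≤ b) (hc : 0 ≤ c)
    (h1 : d^2 ≤ a*b) (h2 : e^2 ≤ a*c) (h3 : f^2 ≤ b*c)
    (hG : 0 ≤ a*b*c - a*f^2 - c*d^2 - b*e^2 + 2*d*e*f) :
    9*(a*b*c - a*f^2 - c*d^2 - b*e^2 + 2*d*e*f)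
      ≤ (a+b+c)*((a*b-d^2)+(a*c-e^2)+(b*c-f^2)) := by
  set G := a*b*c - a*f^2 - c*d^2 - b*e^2 + 2*d*e*f with hGdef
  set S := a+b+c with hSdef
  set T := (a*b-d^2)+(a*c-e^2)+(b*c-f^2) with hTdef
  have hx : 0 ≤ a*b-d^2 := by linarith
  have hy : 0 ≤ a*c-e^2 := by linarith
  have hz : 0 ≤ b*c-f^2 := by linarith
  have hS : 0 ≤ S := by positivity
  have hT : 0 ≤ T := by simp only [hTdef]; linarith
  have hxy : a*G ≤ (a*b-d^2)*(a*c-e^2) := by nlinarith [sq_nonneg (d*e - a*f)]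
  have hxz : b*G ≤ (a*b-d^2)*(b*c-f^2) := by nlinarith [sq_nonneg (d*f - b*e)]
  have hyz : c*G ≤ (a*c-e^2)*(b*c-f^2) := by nlinarith [sq_nonneg (e*f - c*d)]
  have hT2 : 3*(S*G) ≤ T^2 := by
    simp only [hSdef, hTdef]
    nlinarith [sq_nonneg ((a*b-d^2)-(a*c-e^2)), sq_nonneg ((a*b-d^2)-(b*c-f^2)),
      sq_nonneg ((a*c-e^2)-(b*c-f^2)), hxy, hxz, hyz]
  have habc : G ≤ a*b*c := by
    rcases eq_or_lt_of_le ha with h | h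
    · have hd : d = 0 := by
        have h' : d^2 = 0 := le_antisymm (by nlinarith) (sq_nonneg d)
        exact pow_eq_zero_iff two_ne_zero |>.mp h'
      have he : e = 0 := by
        have h' : e^2 = 0 := le_antisymm (by nlinarith) (sq_nonneg e)
        exact pow_eq_zero_iff two_ne_zero |>.mp h'
      simp only [hGdef, hd, he, ← h]
      nlinarith [mul_nonneg hb (sq_nonneg f), mul_nonneg hc (sq_nonneg f)]
    · simp only [hGdef]
      nlinarith [sq_nonneg (a*f - d*e), mul_nonneg (sq_nonneg d) (sub_nonneg.2 h2),
        mul_nonneg (mul_nonneg ha hb) (sq_nonneg e), h]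
  have hS3 : 27*(a*b*c) ≤ S^3 := by
    simp only [hSdef]
    nlinarith [mul_nonneg ha (sq_nonneg (b-c)), mul_nonneg hb (sq_nonneg (a-c)),
      mul_nonneg hc (sq_nonneg (a-b)), mul_nonneg (mul_nonneg ha hb) hc]
  have hS3G : 27*G ≤ S^3 := by
    calc 27*G ≤ 27*(a*b*c) := by linarith
    _ ≤ S^3 := hS3
  have hsq : 81*G^2 ≤ (S*T)^2 := by
    have h5 : S^2*(3*(S*G)) ≤ S^2*T^2 :=
      mul_le_mul_of_nonneg_left hT2 (sq_nonneg S)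
    have h6 : 3*G*(27*G) ≤ 3*G*S^3 := mul_le_mul_of_nonneg_left hS3G (by linarith)
    nlinarith [h5, h6]
  nlinarith [hsq, mul_nonneg hS hT, hG]

lemma dot_nonneg' (u : R4) : 0 ≤ dot u u :=
  Finset.sum_nonneg fun a _ => mul_self_nonneg _

lemma cs' (u v : R4) : (dot u v)^2 ≤ dot u u * dot v v := by
  have h := Finset.sum_mul_sq_le_sq_mul_sq Finset.univ u v
  simp only [dot]
  calc (∑ a, u a * v a)^2 ≤ (∑ a, u a ^2) * ∑ a, v a ^2 := h
  _ = (∑ a, u a * u a) * ∑ a, v a * v a := by simp [sq]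

/-- 3 √(Gram(u,v,w)) ≤ (|u|²+|v|²+|w|²)^{1/2} (|u∧v|²+|u∧w|²+|v∧w|²)^{1/2}. -/
theorem gram_le_wedge_bound (u v w : R4) :
    3 * Real.sqrt (gram u v w)
      ≤ Real.sqrt (nsq u + nsq v + nsq w)
          * Real.sqrt (wedgeSq u v + wedgeSq u w + wedgeSq v w) := by
  rcases le_or_gt (gram u v w) 0 with h | h
  · rw [Real.sqrt_eq_zero_of_nonpos h, mul_zero]
    positivity
  · set a := dot u u with hadef
    set b := dot v v with hbdef
    set c := dot w w with hcdef
    set d := dot u v with hddef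
    set e := dot u w with hedef
    set f := dot v w with hfdef
    have hgram : gram u v w = a*b*c - a*f^2 - c*d^2 - b*e^2 + 2*d*e*f := by
      simp only [gram, Matrix.det_fin_three, Matrix.cons_val', Matrix.cons_val_zero,
        Matrix.cons_val_one, Matrix.head_cons, Matrix.empty_val', Matrix.cons_val_fin_one,
        Matrix.head_fin_const, Matrix.cons_val_two, Matrix.tail_cons, Matrix.of_apply,
        dot_comm' v u, dot_comm' w u, dot_comm' w v, ← hadef, ← hbdef, ← hcdef,
        ← hddef, ← hedef, ← hfdef]
      ring
    have hkey := keyineq a b c d e f (dot_nonneg' u) (dot_nonneg' v) (dot_nonneg' w)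
      (cs' u v) (cs' u w) (cs' v w) (by rw [← hgram]; exact h.le)
    have hW : wedgeSq u v + wedgeSq u w + wedgeSq v w
        = (a*b-d^2)+(a*c-e^2)+(b*c-f^2) := by
      simp only [wedgeSq, nsq]; rfl
    have hS : nsq u + nsq v + nsq w = a + b + c := by simp only [nsq]; rfl
    rw [hW, hS, ← Real.sqrt_mul (by linarith [dot_nonneg' u, dot_nonneg' v, dot_nonneg' w] : (0:ℝ) ≤ a + b + c)]
    have h3 : (3:ℝ) * Real.sqrt (gram u v w) = Real.sqrt (9 * gram u v w) := by
      rw [Real.sqrt_mul (by norm_num : (0:ℝ) ≤ 9), show Real.sqrt 9 = 3 by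
        rw [show (9:ℝ) = 3^2 by norm_num, Real.sqrt_sq (by norm_num : (0:ℝ) ≤ 3)]]
    rw [h3]
    apply Real.sqrt_le_sqrt
    rw [hgram]
    linarith [hkey]
end
end
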